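/- arXiv:2405.00488 — 4 statements merged into one kernel-verified Lean document; each statement's English description precedes it below -/
import Mathlib

section
/- Let (D, y) be a left Kan pseudomonad on a 2-category K. For each object A, let p_{DA} := (1_{DA})^D : D²A → DA be the extension of the identity along y_{DA}, with invertible 2-cell Φ_{DA} : 1_{DA} ≅ p_{DA} ∘ y_{DA}. Then there exists a (generally non-invertible) 2-cell Γ_{DA} : 1_{D²A} ⇒ y_{DA} ∘ p_{DA} making (Φ_{DA}⁻¹, Γ_{DA}) into an adjunction p_{DA} ⊣ y_{DA} in K. -/
open CategoryTheory Bicategory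

universe w v u

variable {K : Type u} [Bicategory.{w, v} K]

/-- `(g', δ)` exhibits `g'` as a left Kan extension of `g` along `y`. -/
def IsLeftKan {A' A C : K} (y : A' ⟶ A) (g : A' ⟶ C) (g' : A ⟶ C) (δ : g ⟶ y ≫ g') : Prop :=
  ∀ (h : A ⟶ C) (α : g ⟶ y ≫ h), ∃! θ : g' ⟶ h, δ ≫ y ◁ θ = α

/-- A left Kan pseudomonad `(D, y)` on a bicategory `K`. -/
structure LeftKanPseudomonad (K : Type u) [Bicategory.{w, v} K] where
  /-- the action on objects -/
  obj : K → K
  /-- the unit 1-cells `y_A : A ⟶ DA` -/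
  unit : ∀ A : K, A ⟶ obj A
  /-- the extension operation `f ↦ f^𝔻` -/
  ext : ∀ {A B : K}, (A ⟶ obj B) → (obj A ⟶ obj B)
  /-- the 2-cell exhibiting the extension -/
  extCell : ∀ {A B : K} (f : A ⟶ obj B), f ⟶ unit A ≫ ext f
  /-- the extension 2-cell is invertible -/
  extCell_iso : ∀ {A B : K} (f : A ⟶ obj B), IsIso (extCell f)
  /-- `(f^𝔻, 𝔻_f)` is a left Kan extension of `f` along `y_A` -/
  ext_isKan : ∀ {A B : K} (f : A ⟶ obj B), IsLeftKan (unit A) f (ext f) (extCell f)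
  /-- the identity 2-cell exhibits `𝟙 (DA)` as a left Kan extension of `y_A` along `y_A` -/
  unit_isKan : ∀ A : K, IsLeftKan (unit A) (unit A) (𝟙 (obj A)) (ρ_ (unit A)).inv
  /-- extensions `g^𝔻` preserve the left Kan extensions `(f^𝔻, 𝔻_f)` -/
  ext_preserves : ∀ {A B C : K} (f : A ⟶ obj B) (g : B ⟶ obj C),
    IsLeftKan (unit A) (f ≫ ext g) (ext f ≫ ext g)
      (extCell f ▷ ext g ≫ (α_ (unit A) (ext f) (ext g)).hom)

/-- Auxiliary abstract form: if `Φ : 𝟙 b ⟶ y ≫ p` is invertible, `(p, Φ)` is a left Kan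
extension of `𝟙 b` along `y`, and `(𝟙 a, (ρ_ y).inv)` is a left Kan extension of `y` along `y`,
then there is `Γ` making `(Φ⁻¹, Γ)` into an adjunction `p ⊣ y`. -/
theorem leftKan_adj_aux {a b : K} {p : a ⟶ b} {y : b ⟶ a} (Φ : 𝟙 b ⟶ y ≫ p) [IsIso Φ]
    (hKan : IsLeftKan y (𝟙 b) p Φ)
    (hUnit : IsLeftKan y y (𝟙 a) (ρ_ y).inv) :
    ∃ (Γ : 𝟙 a ⟶ p ≫ y) (adj : Bicategory.Adjunction p y),
      adj.unit = Γ ∧ adj.counit ≫ Φ = 𝟙 (y ≫ p) ∧ Φ ≫ adj.counit = 𝟙 (𝟙 b) := by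
  obtain ⟨Γ, hΓ, -⟩ := hUnit (p ≫ y) ((λ_ y).inv ≫ Φ ▷ y ≫ (α_ y p y).hom)
  have hyΓ : y ◁ Γ = (ρ_ y).hom ≫ (λ_ y).inv ≫ Φ ▷ y ≫ (α_ y p y).hom := by
    rw [← hΓ, ← Category.assoc, Iso.hom_inv_id, Category.id_comp]
  have key : Φ ≫ y ◁ ((λ_ p).inv ≫ Γ ▷ p ≫ (α_ p y p).hom ≫ p ◁ inv Φ ≫ (ρ_ p).hom) = Φ := by
    calc Φ ≫ y ◁ ((λ_ p).inv ≫ Γ ▷ p ≫ (α_ p y p).hom ≫ p ◁ inv Φ ≫ (ρ_ p).hom)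
        = Φ ⊗≫ (y ◁ Γ) ▷ p ⊗≫ (y ≫ p) ◁ inv Φ ⊗≫ 𝟙 _ := by
          bicategory
      _ = 𝟙 _ ⊗≫ (𝟙 b ◁ Φ ≫ Φ ▷ (y ≫ p)) ⊗≫ (y ≫ p) ◁ inv Φ ⊗≫ 𝟙 _ := by
          rw [hyΓ]; bicategory
      _ = 𝟙 _ ⊗≫ (Φ ▷ 𝟙 b ≫ (y ≫ p) ◁ Φ) ⊗≫ (y ≫ p) ◁ inv Φ ⊗≫ 𝟙 _ := by
          rw [whisker_exchange]
      _ = 𝟙 _ ⊗≫ Φ ▷ 𝟙 b ⊗≫ (y ≫ p) ◁ (Φ ≫ inv Φ) ⊗≫ 𝟙 _ := by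
          bicategory
      _ = Φ := by
          rw [IsIso.hom_inv_id]; bicategory
  obtain ⟨θ, -, hun⟩ := hKan p Φ
  have hid : (λ_ p).inv ≫ Γ ▷ p ≫ (α_ p y p).hom ≫ p ◁ inv Φ ≫ (ρ_ p).hom = 𝟙 p := by
    rw [hun _ key, hun (𝟙 p) (by simp)]
  refine ⟨Γ, ⟨Γ, inv Φ, ?_, ?_⟩, rfl, by simp, by simp⟩
  · calc leftZigzag Γ (inv Φ)
        = (λ_ p).hom ≫
            ((λ_ p).inv ≫ Γ ▷ p ≫ (α_ p y p).hom ≫ p ◁ inv Φ ≫ (ρ_ p).hom) ≫ (ρ_ p).inv := by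
          bicategory
      _ = (λ_ p).hom ≫ (ρ_ p).inv := by rw [hid]; simp
  · calc rightZigzag Γ (inv Φ)
        = 𝟙 _ ⊗≫ (Φ ≫ inv Φ) ▷ y ⊗≫ 𝟙 _ := by rw [rightZigzag, hyΓ]; bicategory
      _ = (ρ_ y).hom ≫ (λ_ y).inv := by rw [IsIso.hom_inv_id]; bicategory

/-- for a left Kan pseudomonad `(D, y)`, with `p_{DA} := (𝟙 DA)^𝔻` and
`Φ_{DA} := 𝔻_{𝟙 DA} : 𝟙 DA ≅ y_{DA} ≫ p_{DA}` invertible, there is a (generally non-invertible)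
2-cell `Γ_{DA} : 𝟙 (D²A) ⟶ p_{DA} ≫ y_{DA}` making `(Φ_{DA}⁻¹, Γ_{DA})` into an adjunction
`p_{DA} ⊣ y_{DA}` in `K`. -/
theorem leftKanPseudomonad_mult_adj_unit (D : LeftKanPseudomonad K) (A : K) :
    ∃ (Γ : 𝟙 (D.obj (D.obj A)) ⟶ D.ext (𝟙 (D.obj A)) ≫ D.unit (D.obj A))
      (adj : Bicategory.Adjunction (D.ext (𝟙 (D.obj A))) (D.unit (D.obj A))),
      adj.unit = Γ ∧
      adj.counit ≫ D.extCell (𝟙 (D.obj A)) = 𝟙 (D.unit (D.obj A) ≫ D.ext (𝟙 (D.obj A))) ∧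
      D.extCell (𝟙 (D.obj A)) ≫ adj.counit = 𝟙 (𝟙 (D.obj A)) := by
  haveI := D.extCell_iso (𝟙 (D.obj A))
  exact leftKan_adj_aux (D.extCell (𝟙 (D.obj A))) (D.ext_isKan (𝟙 (D.obj A)))
    (D.unit_isKan (D.obj A))
end

section
/- Let (D, y) be a left Kan pseudomonad on a 2-category K and let A be an object of K. If for every object B every 1-cell B → A admits a left Kan extension along y_B : B → DB with invertible unit 2-cell, then the unit y_A : A → DA admits a left adjoint a : DA → A whose counit a ∘ y_A ⇒ 1_A is invertible (i.e. y_A admits a reflector). -/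
open CategoryTheory Bicategory

universe w v u

variable {K : Type u} [Bicategory.{w, v} K]

/-- if every 1-cell `B ⟶ A` admits a left Kan extension along `y_B` with
invertible unit 2-cell, then `y_A` admits a reflector: a left adjoint `a : DA ⟶ A` whose
counit `y_A ≫ a ⟶ 𝟙 A` is invertible. -/
theorem unit_admits_reflector (D : LeftKanPseudomonad K) (A : K)
    (hext : ∀ (B : K) (g : B ⟶ A), ∃ (g' : D.obj B ⟶ A) (δ : g ⟶ D.unit B ≫ g'),
      IsLeftKan (D.unit B) g g' δ ∧ IsIso δ) :
    ∃ (a : D.obj A ⟶ A) (adj : Bicategory.Adjunction a (D.unit A)), IsIso adj.counit := by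
  obtain ⟨a, δ, hKan, hδ⟩ := hext A (𝟙 A)
  haveI := hδ
  -- construct the unit via the Kan property of `𝟙 (D.obj A)`
  obtain ⟨η, hη, -⟩ := D.unit_isKan A (a ≫ D.unit A)
    ((λ_ (D.unit A)).inv ≫ δ ▷ D.unit A ≫ (α_ (D.unit A) a (D.unit A)).hom)
  have hη' : D.unit A ◁ η = (ρ_ (D.unit A)).hom ≫ (λ_ (D.unit A)).inv ≫
      δ ▷ D.unit A ≫ (α_ (D.unit A) a (D.unit A)).hom := by
    rw [← hη]; simp
  -- the counit
  have left_tri : leftZigzag η (inv δ) = (λ_ a).hom ≫ (ρ_ a).inv := by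
    obtain ⟨θ₀, -, huniq⟩ := hKan a δ
    have h1 : δ ≫ D.unit A ◁ ((λ_ a).inv ≫ leftZigzag η (inv δ) ≫ (ρ_ a).hom) = δ := by
      calc δ ≫ D.unit A ◁ ((λ_ a).inv ≫ leftZigzag η (inv δ) ≫ (ρ_ a).hom)
          = δ ⊗≫ (D.unit A ◁ η) ▷ a ⊗≫ (D.unit A ≫ a) ◁ (inv δ) ⊗≫ 𝟙 _ := by
            dsimp only [leftZigzag]; bicategory
        _ = δ ⊗≫ (δ ▷ (D.unit A ≫ a) ≫ (D.unit A ≫ a) ◁ (inv δ)) ⊗≫ 𝟙 _ := by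
            rw [hη']; bicategory
        _ = δ ⊗≫ (𝟙 A ◁ (inv δ) ≫ δ ▷ 𝟙 A) ⊗≫ 𝟙 _ := by
            rw [whisker_exchange]
        _ = (δ ≫ inv δ) ≫ δ := by bicategory
        _ = δ := by rw [IsIso.hom_inv_id, Category.id_comp]
    have h2 : δ ≫ D.unit A ◁ (𝟙 a) = δ := by simp
    have h3 := (huniq _ h1).trans (huniq _ h2).symm
    calc leftZigzag η (inv δ)
        = (λ_ a).hom ≫ ((λ_ a).inv ≫ leftZigzag η (inv δ) ≫ (ρ_ a).hom) ≫ (ρ_ a).inv := by simp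
      _ = (λ_ a).hom ≫ (𝟙 a) ≫ (ρ_ a).inv := by rw [h3]
      _ = (λ_ a).hom ≫ (ρ_ a).inv := by simp
  have right_tri : rightZigzag η (inv δ) = (ρ_ (D.unit A)).hom ≫ (λ_ (D.unit A)).inv := by
    calc rightZigzag η (inv δ)
        = (D.unit A ◁ η) ⊗≫ (inv δ) ▷ D.unit A := rfl
      _ = (ρ_ (D.unit A)).hom ≫ (λ_ (D.unit A)).inv ≫
            ((δ ≫ inv δ) ▷ D.unit A) ≫ 𝟙 _ := by rw [hη']; bicategory
      _ = (ρ_ (D.unit A)).hom ≫ (λ_ (D.unit A)).inv := by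
          rw [IsIso.hom_inv_id]; simp
  exact ⟨a, ⟨η, inv δ, left_tri, right_tri⟩, inferInstanceAs (IsIso (inv δ))⟩
end

section
/- Let (D, y) be a left Kan pseudomonad on a 2-category K and let A be an object such that y_A : A → DA admits a left adjoint a with invertible counit. Then for every object B of K and every 1-cell g : B → A, the left Kan extension of g along y_B : B → DB exists with invertible unit; in particular A admits the structure of a pseudo-D-algebra. -/
open CategoryTheory Bicategory

universe w v u

variable {K : Type u} [Bicategory.{w, v} K]

/-- A pseudo-`D`-algebra structure on `C`: a choice, for every `f : B ⟶ C`, of a left Kan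
extension of `f` along `y_B` with invertible unit, preserved by the extensions `(−)^𝔻`. -/
structure PseudoDAlgebra (D : LeftKanPseudomonad K) (C : K) where
  ext : ∀ {B : K}, (B ⟶ C) → (D.obj B ⟶ C)
  cell : ∀ {B : K} (f : B ⟶ C), f ⟶ D.unit B ≫ ext f
  cell_iso : ∀ {B : K} (f : B ⟶ C), IsIso (cell f)
  isKan : ∀ {B : K} (f : B ⟶ C), IsLeftKan (D.unit B) f (ext f) (cell f)
  preserves : ∀ {A B : K} (f : A ⟶ D.obj B) (g : B ⟶ C),
    IsLeftKan (D.unit A) (f ≫ ext g) (D.ext f ≫ ext g)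
      (D.extCell f ▷ ext g ≫ (α_ (D.unit A) (D.ext f) (ext g)).hom)

/-!
Left adjoints preserve left Kan extensions. Since the counit `y_A ≫ a ⟶ 𝟙 A` is invertible,
`g ≅ (g ≫ y_A) ≫ a`, so whiskering the Kan extension `((g ≫ y_A)^D, D_{g ≫ y_A})` by the left
adjoint `a` exhibits `(g ≫ y_A)^D ≫ a` as a left Kan extension of `g` along `y_B` with invertible
unit. Whiskering the preservation property of `(−)^D` by `a` in the same way gives the
preservation property of the pseudo-algebra.
-/

namespace IsLeftKan

variable {A' A C : K} {y : A' ⟶ A} {g : A' ⟶ C} {g' : A ⟶ C} {δ : g ⟶ y ≫ g'}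

theorem iff_nonempty_isKan :
    IsLeftKan y g g' δ ↔ Nonempty (LeftExtension.mk g' δ).IsKan := by
  constructor
  · intro H
    choose θ hθ huniq using fun s : LeftExtension y g => H s.extension s.unit
    exact ⟨.mk (fun s => LeftExtension.homMk (θ s) (hθ s)) fun s τ =>
      StructuredArrow.ext _ _ (huniq s τ.right (LeftExtension.w τ))⟩
  · rintro ⟨H⟩ h α
    exact ⟨H.desc (.mk h α), H.fac (.mk h α),
      fun θ hθ => H.hom_ext (by rw [H.fac]; exact hθ)⟩

theorem whisker_leftAdjoint (H : IsLeftKan y g g' δ) {C' : K} {l : C ⟶ C'} {r : C' ⟶ C}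
    (adj : l ⊣ r) : IsLeftKan y (g ≫ l) (g' ≫ l) (δ ▷ l ≫ (α_ y g' l).hom) :=
  let ⟨H⟩ := iff_nonempty_isKan.mp H
  iff_nonempty_isKan.mpr ⟨LeftExtension.isKanOfWhiskerLeftAdjoint H adj⟩

theorem of_iso (H : IsLeftKan y g g' δ) {g₁ : A' ⟶ C} {g₁' : A ⟶ C} (e : g₁ ≅ g)
    (e' : g' ≅ g₁') {δ₁ : g₁ ⟶ y ≫ g₁'} (hδ₁ : δ₁ = e.hom ≫ δ ≫ y ◁ e'.hom) :
    IsLeftKan y g₁ g₁' δ₁ := by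
  subst hδ₁
  intro h α
  obtain ⟨θ, hθ, huniq⟩ := H h (e.inv ≫ α)
  refine ⟨e'.inv ≫ θ, ?_, fun θ₁ hθ₁ => ?_⟩
  · beta_reduce
    rw [whiskerLeft_comp, Category.assoc, Category.assoc, whiskerLeft_hom_inv_assoc, hθ,
      Iso.hom_inv_id_assoc]
  · have : δ ≫ y ◁ (e'.hom ≫ θ₁) = e.inv ≫ α := by
      rw [← hθ₁]
      simp
    rw [← huniq _ this, Iso.inv_hom_id_assoc]

end IsLeftKan

namespace PseudoDAlgebra

variable (D : LeftKanPseudomonad K) {A : K} {a : D.obj A ⟶ A} (adj : a ⊣ D.unit A)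
  [IsIso adj.counit]

noncomputable def ofReflector : PseudoDAlgebra D A where
  ext g := D.ext (g ≫ D.unit A) ≫ a
  cell {B} g := (ρ_ g).inv ≫ g ◁ inv adj.counit ≫ (α_ g (D.unit A) a).inv ≫
    D.extCell (g ≫ D.unit A) ▷ a ≫ (α_ (D.unit B) (D.ext (g ≫ D.unit A)) a).hom
  cell_iso g := by
    have := D.extCell_iso (g ≫ D.unit A)
    infer_instance
  isKan g := ((D.ext_isKan (g ≫ D.unit A)).whisker_leftAdjoint adj).of_iso
    ((ρ_ g).symm ≪≫ whiskerLeftIso g (asIso adj.counit).symm ≪≫ (α_ g (D.unit A) a).symm)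
    (Iso.refl _) (by simp)
  preserves f g := ((D.ext_preserves f (g ≫ D.unit A)).whisker_leftAdjoint adj).of_iso
    (α_ f (D.ext (g ≫ D.unit A)) a).symm (α_ (D.ext f) (D.ext (g ≫ D.unit A)) a)
    (by simp only [Iso.symm_hom]; bicategory)

end PseudoDAlgebra

/-- if `y_A` admits a left adjoint `a` with invertible counit, then every
`g : B ⟶ A` admits a left Kan extension along `y_B` with invertible unit; in particular `A`
admits the structure of a pseudo-`D`-algebra. -/
theorem pseudoAlgebra_of_reflector (D : LeftKanPseudomonad K) (A : K)
    (a : D.obj A ⟶ A) (adj : Bicategory.Adjunction a (D.unit A)) (hcounit : IsIso adj.counit) :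
    (∀ (B : K) (g : B ⟶ A), ∃ (g' : D.obj B ⟶ A) (δ : g ⟶ D.unit B ≫ g'),
      IsLeftKan (D.unit B) g g' δ ∧ IsIso δ) ∧
    Nonempty (PseudoDAlgebra D A) := by
  let alg := PseudoDAlgebra.ofReflector D adj
  exact ⟨fun _ g => ⟨alg.ext g, alg.cell g, alg.isKan g, alg.cell_iso g⟩, ⟨alg⟩⟩
end

section
/- Let (D, y) be a left Kan pseudomonad on a 2-category K, and suppose f : B → C is a 1-cell such that Df := (y_C ∘ f)^D : DB → DC admits a right adjoint r : DC → DB in the Kleisli 2-category K_D with invertible unit η. Let A be an object admitting a pseudo-D-algebra structure (extensions along units with invertible 2-cells). Then the precomposition functor f^* : K(C, A) → K(B, A) admits a left adjoint with invertible unit; concretely, the left adjoint sends g : B → A to g^A ∘ r ∘ y_C, where g^A : DB → A is the left Kan extension of g along y_B. -/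
/-!
For `g : B ⟶ A` and `h : C ⟶ A`, 2-cells `y_C ≫ r ≫ g^A ⟶ h` correspond to 2-cells
`r ≫ g^A ⟶ h^A`: since `r` is a Kleisli morphism and `g^A` is preserved by extensions,
`r ≫ g^A` is the left Kan extension of its restriction along `y_C`, with invertible unit.
By the adjunction `Df ⊣ r` these are the 2-cells `g^A ⟶ Df ≫ h^A`, which by the universal
property of `g^A` are the 2-cells `g ⟶ y_B ≫ Df ≫ h^A ≅ f ≫ h`. The composite bijection is
`θ ↦ Δ_g ≫ f ◁ θ` for a 2-cell `Δ_g : g ⟶ f ≫ y_C ≫ r ≫ g^A` built from the unit of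
`Df ⊣ r`; so `Δ_g` is the unit of an adjunction, invertible when the unit of `Df ⊣ r` is.
-/

open CategoryTheory Bicategory

universe w v u

variable {K : Type u} [Bicategory.{w, v} K]

/-- Precomposition with a 1-cell, as a functor on hom-categories. -/
@[simps]
def precompFunctor {B C A : K} (f : B ⟶ C) : (C ⟶ A) ⥤ (B ⟶ A) where
  obj g := f ≫ g
  map η := f ◁ η

namespace IsLeftKan

variable {A' A C : K} {y : A' ⟶ A} {g : A' ⟶ C} {g' : A ⟶ C} {δ : g ⟶ y ≫ g'}

theorem bijective (H : IsLeftKan y g g' δ) (h : A ⟶ C) :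
    Function.Bijective (fun θ : g' ⟶ h => δ ≫ y ◁ θ) :=
  (Function.bijective_iff_existsUnique _).2 (H h)

theorem of_bijective (H : ∀ h : A ⟶ C, Function.Bijective (fun θ : g' ⟶ h => δ ≫ y ◁ θ)) :
    IsLeftKan y g g' δ :=
  fun h => (Function.bijective_iff_existsUnique _).1 (H h)

theorem comp_whiskerLeft_iso (H : IsLeftKan y g g' δ) {g'' : A ⟶ C} (θ : g' ⟶ g'')
    [IsIso θ] : IsLeftKan y g g'' (δ ≫ y ◁ θ) := by
  refine of_bijective fun h => ?_
  convert (H.bijective h).comp ((asIso θ).homFromEquiv (Z := h)).symm.bijective using 1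
  funext ξ
  simp

theorem exists_isIso {g'' : A ⟶ C} {δ' : g ⟶ y ≫ g''} (H : IsLeftKan y g g' δ)
    (H' : IsLeftKan y g g'' δ') : ∃ θ : g' ⟶ g'', δ ≫ y ◁ θ = δ' ∧ IsIso θ := by
  obtain ⟨θ, hθ, -⟩ := H g'' δ'
  obtain ⟨θ', hθ', -⟩ := H' g' δ
  refine ⟨θ, hθ, θ', (H.bijective g').1 ?_, (H'.bijective g'').1 ?_⟩ <;>
    simp only [whiskerLeft_comp, whiskerLeft_id, ← Category.assoc, hθ, hθ', Category.comp_id]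

theorem whiskerLeft_bijective [IsIso δ] (H : IsLeftKan y g g' δ) (h : A ⟶ C) :
    Function.Bijective (fun θ : g' ⟶ h => y ◁ θ) := by
  convert ((asIso δ).homFromEquiv (Z := y ≫ h)).bijective.comp (H.bijective h) using 1
  funext θ
  simp

theorem whiskerRight_of_isLeftKan {E : K} {g'' : A ⟶ C} {δ' : g ⟶ y ≫ g''}
    (H : IsLeftKan y g g' δ) (H' : IsLeftKan y g g'' δ') (k : C ⟶ E)
    (Hk : IsLeftKan y (g ≫ k) (g' ≫ k) (δ ▷ k ≫ (α_ y g' k).hom)) :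
    IsLeftKan y (g ≫ k) (g'' ≫ k) (δ' ▷ k ≫ (α_ y g'' k).hom) := by
  obtain ⟨θ, rfl, _⟩ := H.exists_isIso H'
  convert Hk.comp_whiskerLeft_iso (θ ▷ k) using 1
  simp

end IsLeftKan

namespace CategoryTheory.Adjunction

variable {C₀ D₀ : Type*} [Category C₀] [Category D₀] (G : D₀ ⥤ C₀) {F : C₀ → D₀}
  (u : ∀ X, X ⟶ G.obj (F X)) (hu : ∀ X Y, Function.Bijective (fun θ : F X ⟶ Y => u X ≫ G.map θ))

noncomputable def ofBijectiveUnit :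
    leftAdjointOfEquiv (fun X Y => Equiv.ofBijective _ (hu X Y)) (fun _ _ _ _ _ => by simp) ⊣ G :=
  adjunctionOfEquivLeft _ _

@[simp]
theorem ofBijectiveUnit_unit_app (X : C₀) : (ofBijectiveUnit G u hu).unit.app X = u X := by
  simp [ofBijectiveUnit, adjunctionOfEquivLeft]

theorem isIso_ofBijectiveUnit_unit (hiso : ∀ X, IsIso (u X)) :
    IsIso (ofBijectiveUnit G u hu).unit := by
  have (X : C₀) : IsIso ((ofBijectiveUnit G u hu).unit.app X) := by
    rw [ofBijectiveUnit_unit_app]; exact hiso X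
  exact NatIso.isIso_of_isIso_app _

end CategoryTheory.Adjunction

namespace LeftKanPseudomonad

variable (D : LeftKanPseudomonad K)

instance {A B : K} (f : A ⟶ D.obj B) : IsIso (D.extCell f) := D.extCell_iso f

theorem isLeftKan_of_preserves_unit {C E : K} (r : D.obj C ⟶ E)
    (hr : IsLeftKan (D.unit C) (D.unit C ≫ r) (D.ext (D.unit C) ≫ r)
      (D.extCell (D.unit C) ▷ r ≫ (α_ (D.unit C) (D.ext (D.unit C)) r).hom)) :
    IsLeftKan (D.unit C) (D.unit C ≫ r) r (𝟙 _) := by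
  have := ((D.ext_isKan _).whiskerRight_of_isLeftKan (D.unit_isKan C) r hr).comp_whiskerLeft_iso
    (λ_ r).hom
  convert this using 1
  bicategory

end LeftKanPseudomonad

namespace PseudoDAlgebra

variable {D : LeftKanPseudomonad K} {A : K} (alg : PseudoDAlgebra D A)

instance {B : K} (g : B ⟶ A) : IsIso (alg.cell g) := alg.cell_iso g

theorem isLeftKan_comp_ext {B C : K} {r : D.obj C ⟶ D.obj B}
    (hr : IsLeftKan (D.unit C) (D.unit C ≫ r) r (𝟙 _)) (g : B ⟶ A) :
    IsLeftKan (D.unit C) ((D.unit C ≫ r) ≫ alg.ext g) (r ≫ alg.ext g) (α_ _ _ _).hom := by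
  convert (D.ext_isKan _).whiskerRight_of_isLeftKan hr (alg.ext g) (alg.preserves _ g) using 1
  simp

end PseudoDAlgebra

section KleisliCoreflection

variable (D : LeftKanPseudomonad K) {B C A : K} (f : B ⟶ C) {r : D.obj C ⟶ D.obj B}
  (adj : Bicategory.Adjunction (D.ext (f ≫ D.unit C)) r) (alg : PseudoDAlgebra D A)

noncomputable def coreflectionUnit (g : B ⟶ A) : g ⟶ f ≫ (D.unit C ≫ r ≫ alg.ext g) :=
  alg.cell g ⊗≫ D.unit B ◁ (adj.unit ▷ alg.ext g) ⊗≫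
    inv (D.extCell (f ≫ D.unit C)) ▷ (r ≫ alg.ext g) ⊗≫ 𝟙 _

theorem isIso_coreflectionUnit [IsIso adj.unit] (g : B ⟶ A) :
    IsIso (coreflectionUnit D f adj alg g) := by
  dsimp only [coreflectionUnit, bicategoricalComp]
  infer_instance

theorem coreflectionUnit_comp_whiskerLeft {g : B ⟶ A} {h : C ⟶ A}
    (ψ : r ≫ alg.ext g ⟶ alg.ext h) :
    coreflectionUnit D f adj alg g ≫ f ◁ (D.unit C ◁ ψ) =
      alg.cell g ⊗≫ D.unit B ◁ adj.homEquiv₁.symm ψ ⊗≫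
        inv (D.extCell (f ≫ D.unit C)) ▷ alg.ext h ⊗≫ 𝟙 _ := by
  calc coreflectionUnit D f adj alg g ≫ f ◁ (D.unit C ◁ ψ)
      = alg.cell g ⊗≫ D.unit B ◁ (adj.unit ▷ alg.ext g) ⊗≫
          (inv (D.extCell (f ≫ D.unit C)) ▷ (r ≫ alg.ext g) ≫ (f ≫ D.unit C) ◁ ψ) ⊗≫ 𝟙 _ := by
        dsimp only [coreflectionUnit]; bicategory
    _ = alg.cell g ⊗≫ D.unit B ◁ (adj.unit ▷ alg.ext g) ⊗≫
          ((D.unit B ≫ D.ext (f ≫ D.unit C)) ◁ ψ ≫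
            inv (D.extCell (f ≫ D.unit C)) ▷ alg.ext h) ⊗≫ 𝟙 _ := by
        rw [← whisker_exchange]
    _ = _ := by
        simp only [Adjunction.homEquiv₁_symm_apply]; bicategory

theorem coreflectionUnit_comp_whiskerLeft_bijective
    (hr : IsLeftKan (D.unit C) (D.unit C ≫ r) r (𝟙 _)) (g : B ⟶ A) (h : C ⟶ A) :
    Function.Bijective
      (fun θ : D.unit C ≫ r ≫ alg.ext g ⟶ h => coreflectionUnit D f adj alg g ≫ f ◁ θ) := by
  have restrict : Function.Bijective
      (fun ψ : r ≫ alg.ext g ⟶ alg.ext h => D.unit C ◁ ψ ≫ inv (alg.cell h)) :=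
    (asIso (inv (alg.cell h))).homToEquiv.bijective.comp
      ((alg.isLeftKan_comp_ext hr g).whiskerLeft_bijective _)
  let σ : D.unit B ≫ D.ext (f ≫ D.unit C) ≫ alg.ext h ⟶ f ≫ h :=
    𝟙 _ ⊗≫ inv (D.extCell (f ≫ D.unit C)) ▷ alg.ext h ⊗≫ f ◁ inv (alg.cell h)
  have : IsIso σ := by dsimp only [σ, bicategoricalComp]; infer_instance
  rw [← Function.Bijective.of_comp_iff _ restrict]
  convert ((asIso σ).homToEquiv.bijective.comp ((alg.isKan g).bijective _)).comp
    adj.homEquiv₁.symm.bijective using 1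
  funext ψ
  simp only [Function.comp_apply, Iso.homToEquiv_apply, asIso_hom, whiskerLeft_comp,
    ← Category.assoc, coreflectionUnit_comp_whiskerLeft]
  bicategory

end KleisliCoreflection

/-- if `Df := (y_C ∘ f)^𝔻` admits a right adjoint `r` in the Kleisli 2-category
(i.e. an adjunction in `K` in which `r` is a morphism of free algebras) with invertible unit,
and `A` carries a pseudo-`D`-algebra structure, then precomposition
`f^* : K(C, A) ⥤ K(B, A)` admits a left adjoint with invertible unit, given by
`g ↦ g^A ∘ r ∘ y_C`. -/
theorem precomp_left_adjoint_of_kleisli_coreflection (D : LeftKanPseudomonad K)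
    {B C : K} (f : B ⟶ C) (r : D.obj C ⟶ D.obj B)
    (adj : Bicategory.Adjunction (D.ext (f ≫ D.unit C)) r) (hη : IsIso adj.unit)
    (hr : ∀ {X : K} (g : X ⟶ D.obj C),
      IsLeftKan (D.unit X) (g ≫ r) (D.ext g ≫ r)
        (D.extCell g ▷ r ≫ (α_ (D.unit X) (D.ext g) r).hom))
    (A : K) (alg : PseudoDAlgebra D A) :
    ∃ (L : (B ⟶ A) ⥤ (C ⟶ A)) (adjF : L ⊣ precompFunctor (A := A) f),
      IsIso adjF.unit ∧ ∀ g : B ⟶ A, L.obj g = D.unit C ≫ r ≫ alg.ext g := by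
  have bij := coreflectionUnit_comp_whiskerLeft_bijective D f adj alg
    (D.isLeftKan_of_preserves_unit r (hr (D.unit C)))
  exact ⟨_, Adjunction.ofBijectiveUnit _ _ bij, Adjunction.isIso_ofBijectiveUnit_unit _ _ bij
    (isIso_coreflectionUnit D f adj alg), fun _ => rfl⟩
end
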